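/- Let P be an n×n real symmetric positive definite matrix and let c > 0. Then there exists a unique θ with 0 < θ < 1/λ_max(P) such that γ(P,θ) = c, where γ(P,θ) = (1/2)·(log det(I − θP) + tr((I − θP)^{-1} − I)). -/

import Mathlib

/-!
Diagonalising `P = U diag(λᵢ) Uᴴ` gives `γ(P, θ) = ∑ᵢ φ(θ λᵢ)` with
`φ = gammaTolScalar`. Since `φ' x = x / (2 (1 - x)²)`, `φ` increases
strictly on `[0, 1)` from `φ 0 = 0`, and it is unbounded there: with `u = (1 - x)^(-1/2)`,
`log u ≤ u - 1` gives `φ x ≥ (u - 1)² / 2`. So `θ ↦ γ(P, θ)` increases continuously from `0`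
on `[0, 1/λmax)` and exceeds every `c`; the intermediate value theorem concludes.
-/

open Matrix

/-- The tolerance function `γ(P,θ) = (1/2)(log det(I−θP) + tr((I−θP)⁻¹ − I))` of the
robust extended Kalman filter. -/
noncomputable def gammaTol {n : ℕ} (P : Matrix (Fin n) (Fin n) ℝ) (θ : ℝ) : ℝ :=
  (1 / 2) * (Real.log ((1 : Matrix (Fin n) (Fin n) ℝ) - θ • P).det
    + Matrix.trace (((1 : Matrix (Fin n) (Fin n) ℝ) - θ • P)⁻¹ - 1))

open Set Unitary

noncomputable def gammaTolScalar (x : ℝ) : ℝ := (1 / 2) * (Real.log (1 - x) + ((1 - x)⁻¹ - 1))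

@[simp]
lemma gammaTolScalar_zero : gammaTolScalar 0 = 0 := by simp [gammaTolScalar]

lemma hasDerivAt_gammaTolScalar {x : ℝ} (hx : x ≠ 1) :
    HasDerivAt gammaTolScalar (x / (2 * (1 - x) ^ 2)) x := by
  have hx' : 1 - x ≠ 0 := sub_ne_zero.mpr hx.symm
  have h₁ : HasDerivAt (fun y : ℝ ↦ 1 - y) (-1) x := (hasDerivAt_id x).const_sub 1
  refine ((h₁.log hx').add ((h₁.inv hx').sub_const 1) |>.const_mul (1 / 2)).congr_deriv ?_
  field_simp
  ring

lemma continuousOn_gammaTolScalar : ContinuousOn gammaTolScalar (Iio 1) := fun _ hx ↦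
  (hasDerivAt_gammaTolScalar (ne_of_lt hx)).continuousAt.continuousWithinAt

lemma strictMonoOn_gammaTolScalar : StrictMonoOn gammaTolScalar (Ico 0 1) := by
  refine strictMonoOn_of_deriv_pos (convex_Ico 0 1)
    (continuousOn_gammaTolScalar.mono Ico_subset_Iio_self) fun x hx ↦ ?_
  rw [interior_Ico] at hx
  rw [(hasDerivAt_gammaTolScalar hx.2.ne).deriv]
  have : 0 < 1 - x := sub_pos.mpr hx.2
  exact div_pos hx.1 (by positivity)

lemma gammaTolScalar_nonneg {x : ℝ} (hx : x ∈ Ico 0 1) : 0 ≤ gammaTolScalar x := by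
  simpa using strictMonoOn_gammaTolScalar.monotoneOn (left_mem_Ico.mpr one_pos) hx hx.1

lemma sq_sub_one_div_two_le_gammaTolScalar {u : ℝ} (hu : 0 < u) :
    (u - 1) ^ 2 / 2 ≤ gammaTolScalar (1 - (u ^ 2)⁻¹) := by
  have hlog : Real.log u ≤ u - 1 := Real.log_le_sub_one_of_pos hu
  rw [gammaTolScalar, sub_sub_cancel, inv_inv, Real.log_inv, Real.log_pow]
  push_cast
  nlinarith

lemma exists_mem_Ico_le_gammaTolScalar (c : ℝ) : ∃ x ∈ Ico 0 1, c ≤ gammaTolScalar x := by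
  set u := |c| + 2
  have hu : 1 < u := by have := abs_nonneg c; linarith
  refine ⟨1 - (u ^ 2)⁻¹, ⟨?_, ?_⟩, ?_⟩
  · rw [sub_nonneg]; exact inv_le_one_of_one_le₀ (one_le_pow₀ hu.le)
  · rw [sub_lt_self_iff]; positivity
  · refine le_trans ?_ (sq_sub_one_div_two_le_gammaTolScalar (by linarith))
    nlinarith [le_abs_self c, abs_nonneg c]

namespace Matrix

variable {n R : Type*} [Fintype n] [DecidableEq n]

lemma trace_conjStarAlgAut [CommRing R] [StarRing R] (u : unitary (Matrix n n R))
    (A : Matrix n n R) : (conjStarAlgAut R _ u A).trace = A.trace := by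
  rw [conjStarAlgAut_apply, trace_mul_cycle, coe_star_mul_self, one_mul]

lemma inv_conjStarAlgAut [CommRing R] [StarRing R] (u : unitary (Matrix n n R))
    (A : Matrix n n R) : (conjStarAlgAut R _ u A)⁻¹ = conjStarAlgAut R _ u A⁻¹ := by
  have hu : (u : Matrix n n R)⁻¹ = star (u : Matrix n n R) :=
    inv_eq_left_inv (star_mul_self_of_mem u.2)
  have hu' : (star u : Matrix n n R)⁻¹ = u := inv_eq_left_inv (coe_mul_star_self u)
  rw [conjStarAlgAut_apply, conjStarAlgAut_apply, mul_inv_rev, mul_inv_rev, hu, hu', mul_assoc]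

lemma inv_diagonal_of_ne_zero [Field R] {d : n → R} (hd : ∀ i, d i ≠ 0) :
    (diagonal d)⁻¹ = diagonal fun i ↦ (d i)⁻¹ :=
  inv_eq_right_inv <| by simp [diagonal_mul_diagonal, hd]

lemma IsHermitian.one_sub_smul_eq_conjStarAlgAut {A : Matrix n n ℝ} (hA : A.IsHermitian)
    (θ : ℝ) : 1 - θ • A = conjStarAlgAut ℝ _ hA.eigenvectorUnitary
      (diagonal fun i ↦ 1 - θ * hA.eigenvalues i) := by
  conv_lhs => rw [hA.spectral_theorem]
  rw [← map_one (conjStarAlgAut ℝ _ hA.eigenvectorUnitary), ← map_smul, ← map_sub]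
  congr 1
  ext i j
  by_cases h : i = j <;> simp [h]

end Matrix

lemma gammaTol_eq_sum_gammaTolScalar {n : ℕ} {P : Matrix (Fin n) (Fin n) ℝ}
    (hP : P.IsHermitian) {θ : ℝ} (hθ : ∀ i, θ * hP.eigenvalues i ≠ 1) :
    gammaTol P θ = ∑ i, gammaTolScalar (θ * hP.eigenvalues i) := by
  have hne : ∀ i, 1 - θ * hP.eigenvalues i ≠ 0 := fun i ↦ sub_ne_zero.mpr (hθ i).symm
  rw [gammaTol, hP.one_sub_smul_eq_conjStarAlgAut, inv_conjStarAlgAut, det_map, trace_sub,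
    trace_conjStarAlgAut, det_diagonal, Real.log_prod fun i _ ↦ hne i,
    inv_diagonal_of_ne_zero hne, trace_diagonal, trace_one]
  simp only [gammaTolScalar, ← Finset.mul_sum, Finset.sum_add_distrib, Finset.sum_sub_distrib,
    Finset.sum_const, Finset.card_univ, nsmul_eq_mul, mul_one]

lemma StrictMonoOn.existsUnique_mem_Ioo_eq {f : ℝ → ℝ} {a b c : ℝ}
    (hmono : StrictMonoOn f (Ico a b)) (hcont : ContinuousOn f (Ico a b)) (hac : f a < c)
    (hbc : ∃ x ∈ Ico a b, c ≤ f x) : ∃! x, x ∈ Ioo a b ∧ f x = c := by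
  obtain ⟨x, hx, hcx⟩ := hbc
  obtain ⟨y, hy, hyc⟩ := intermediate_value_Icc hx.1 (hcont.mono (Icc_subset_Ico_right hx.2))
    ⟨hac.le, hcx⟩
  have hay : a < y := hy.1.lt_of_ne fun h ↦ hac.ne (h ▸ hyc)
  have hyb : y < b := hy.2.trans_lt hx.2
  refine ⟨y, ⟨⟨hay, hyb⟩, hyc⟩, fun z ⟨hz, hzc⟩ ↦ ?_⟩
  exact hmono.injOn (Ioo_subset_Ico_self hz) ⟨hay.le, hyb⟩ (hzc.trans hyc.symm)

section SumGammaTolScalar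

variable {ι : Type*} {e : ι → ℝ} {L : ℝ}

lemma mul_mem_Ico_of_mem_Ico_one_div (he : ∀ i, 0 < e i) (hL : IsGreatest (range e) L)
    {θ : ℝ} (hθ : θ ∈ Ico 0 (1 / L)) (i : ι) : θ * e i ∈ Ico 0 1 := by
  obtain ⟨⟨j, rfl⟩, hle⟩ := hL
  refine ⟨mul_nonneg hθ.1 (he i).le, ?_⟩
  calc θ * e i ≤ θ * e j := mul_le_mul_of_nonneg_left (hle ⟨i, rfl⟩) hθ.1
    _ < 1 := (lt_div_iff₀ (he j)).mp hθ.2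

variable [Fintype ι]

lemma strictMonoOn_sum_gammaTolScalar (he : ∀ i, 0 < e i) (hL : IsGreatest (range e) L) :
    StrictMonoOn (fun θ ↦ ∑ i, gammaTolScalar (θ * e i)) (Ico 0 (1 / L)) := by
  obtain ⟨j, -⟩ := hL.1
  intro a ha b hb hab
  exact Finset.sum_lt_sum_of_nonempty ⟨j, Finset.mem_univ j⟩ fun i _ ↦
    strictMonoOn_gammaTolScalar (mul_mem_Ico_of_mem_Ico_one_div he hL ha i)
      (mul_mem_Ico_of_mem_Ico_one_div he hL hb i) (mul_lt_mul_of_pos_right hab (he i))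

lemma continuousOn_sum_gammaTolScalar (he : ∀ i, 0 < e i) (hL : IsGreatest (range e) L) :
    ContinuousOn (fun θ ↦ ∑ i, gammaTolScalar (θ * e i)) (Ico 0 (1 / L)) :=
  continuousOn_finsetSum _ fun i _ ↦ continuousOn_gammaTolScalar.comp
    (continuousOn_id.mul continuousOn_const) fun _ hθ ↦
      (mul_mem_Ico_of_mem_Ico_one_div he hL hθ i).2

lemma exists_mem_Ico_le_sum_gammaTolScalar (he : ∀ i, 0 < e i) (hL : IsGreatest (range e) L)
    (c : ℝ) : ∃ θ ∈ Ico 0 (1 / L), c ≤ ∑ i, gammaTolScalar (θ * e i) := by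
  obtain ⟨x, hx, hcx⟩ := exists_mem_Ico_le_gammaTolScalar c
  obtain ⟨j, rfl⟩ := hL.1
  have hθ : x / e j ∈ Ico 0 (1 / e j) :=
    ⟨div_nonneg hx.1 (he j).le, div_lt_div_of_pos_right hx.2 (he j)⟩
  refine ⟨x / e j, hθ, hcx.trans ?_⟩
  calc gammaTolScalar x = gammaTolScalar (x / e j * e j) := by
        rw [div_mul_cancel₀ _ (he j).ne']
    _ ≤ ∑ i, gammaTolScalar (x / e j * e i) := Finset.single_le_sum
        (fun i _ ↦ gammaTolScalar_nonneg (mul_mem_Ico_of_mem_Ico_one_div he hL hθ i))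
        (Finset.mem_univ j)

end SumGammaTolScalar

theorem existsUnique_theta_of_tolerance_general
    {n : ℕ} (P : Matrix (Fin n) (Fin n) ℝ) (hP : P.PosDef)
    (lmax : ℝ) (hlmax : IsGreatest (Set.range hP.1.eigenvalues) lmax)
    (c : ℝ) (hc : 0 < c) :
    ∃! θ : ℝ, 0 < θ ∧ θ < 1 / lmax ∧ gammaTol P θ = c := by
  have he := hP.eigenvalues_pos
  have hγ : ∀ θ ∈ Ico 0 (1 / lmax),
      gammaTol P θ = ∑ i, gammaTolScalar (θ * hP.1.eigenvalues i) := fun θ hθ ↦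
    gammaTol_eq_sum_gammaTolScalar hP.1 fun i ↦
      (mul_mem_Ico_of_mem_Ico_one_div he hlmax hθ i).2.ne
  refine (existsUnique_congr fun θ ↦ ?_).mpr <|
    (strictMonoOn_sum_gammaTolScalar he hlmax).existsUnique_mem_Ioo_eq
      (continuousOn_sum_gammaTolScalar he hlmax) (by simpa using hc)
      (exists_mem_Ico_le_sum_gammaTolScalar he hlmax c)
  refine and_assoc.symm.trans (and_congr_right fun hθ ↦ ?_)
  rw [hγ θ (Ioo_subset_Ico_self hθ)]

/-- Well-posedness of step 8 of the robust extended Kalman filter: for a real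
symmetric positive definite `P` with largest eigenvalue `λmax` and any tolerance
`c > 0`, there is a unique `θ` with `0 < θ < 1/λmax` such that `γ(P,θ) = c`. -/
theorem existsUnique_theta_of_tolerance
    {n : ℕ} (hn : 0 < n) (P : Matrix (Fin n) (Fin n) ℝ) (hP : P.PosDef)
    (lmax : ℝ) (hlmax : IsGreatest (Set.range hP.1.eigenvalues) lmax)
    (c : ℝ) (hc : 0 < c) :
    ∃! θ : ℝ, 0 < θ ∧ θ < 1 / lmax ∧ gammaTol P θ = c :=
  existsUnique_theta_of_tolerance_general P hP lmax hlmax c hc
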